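/- arXiv:1904.05338 — 2 statements merged into one kernel-verified Lean document; each statement's English description precedes it below -/
import Mathlib

section
/- Let S ⊆ ℝ^p be a nonempty closed set that is closed under entrywise sign changes and under permutations of the entries, and suppose every element of S has at most k nonzero entries (for a fixed 1 ≤ k ≤ p). Then for every β ∈ ℝ^p and every θ ∈ Π(β;S), one has θᵢ = 0 for every coordinate i with |βᵢ| < β̄ₖ, where β̄ₖ is the k-th largest absolute value of the entries of β. -/
/-!
If `θ ∈ Π(β;S)` had `θᵢ ≠ 0` with `|βᵢ| < β̄ₖ`, then, since at least `k` coordinates `j` satisfy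
`β̄ₖ ≤ |βⱼ|` while `θ` has at most `k` nonzero entries one of which is `i`, some such `j` has
`θⱼ = 0`. Swapping the entries `i` and `j` of `θ` and choosing the sign of the moved entry so
that `βⱼ θ'ⱼ = |βⱼ θᵢ|` stays in `S` and changes `‖β - θ‖²` by `2 (βᵢ θᵢ - |βⱼ θᵢ|) < 0`,
contradicting minimality.
-/

open Metric Set

noncomputable section

/-- Euclidean space `ℝ^p`. -/
abbrev E (p : ℕ) := EuclideanSpace ℝ (Fin p)

/-- The (possibly set-valued) orthogonal projection onto a set `A`. -/
def projSet {p : ℕ} (A : Set (E p)) (θ : E p) : Set (E p) :=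
  {ω | ω ∈ A ∧ ‖θ - ω‖ = Metric.infDist θ A}

/-- The absolute values of the entries of `β`, sorted in descending order. -/
def sortedAbs {p : ℕ} (β : E p) : List ℝ :=
  List.insertionSort (· ≥ ·) (List.ofFn fun i => |β i|)

open Finset

theorem List.SortedGE.le_countP_getD_le {α : Type*} [LinearOrder α] {l : List α} (hl : l.SortedGE)
    {k : ℕ} (hk : k ≤ l.length) (d : α) :
    k ≤ l.countP (fun x => decide (l.getD (k - 1) d ≤ x)) := by
  obtain rfl | hk0 := Nat.eq_zero_or_pos k
  · exact Nat.zero_le _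
  calc k = (l.take k).countP (fun x => decide (l.getD (k - 1) d ≤ x)) := by
        rw [List.countP_eq_length.2, List.length_take_of_le hk]
        intro x hx
        obtain ⟨n, hn, rfl⟩ := List.mem_take_iff_getElem.1 hx
        rw [List.getD_eq_getElem l d (by omega), decide_eq_true_eq]
        exact hl (a := ⟨n, by omega⟩) (b := ⟨k - 1, by omega⟩) (by simp only [Fin.mk_le_mk]; omega)
    _ ≤ l.countP (fun x => decide (l.getD (k - 1) d ≤ x)) := (List.take_sublist k l).countP_le

theorem List.countP_ofFn_eq_card_filter {α : Type*} {n : ℕ} (f : Fin n → α) (q : α → Prop)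
    [DecidablePred q] : (List.ofFn f).countP (fun x => decide (q x)) = #{j | q (f j)} := by
  rw [← Multiset.coe_countP, ← Fin.univ_val_map, Multiset.countP_map, card_def, filter_val]

theorem le_card_filter_getD_sortedAbs_le {p k : ℕ} (β : E p) (hk : k ≤ p) :
    k ≤ #{j | (sortedAbs β).getD (k - 1) 0 ≤ |β j|} := by
  have hperm : (sortedAbs β).Perm (List.ofFn fun j => |β j|) := List.perm_insertionSort _ _
  rw [← List.countP_ofFn_eq_card_filter, ← hperm.countP_eq]
  exact List.sortedGE_insertionSort.le_countP_getD_le (by simpa [hperm.length_eq] using hk) 0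

theorem norm_sub_le_of_mem_projSet {p : ℕ} {A : Set (E p)} {β θ ω : E p} (hθ : θ ∈ projSet A β)
    (hω : ω ∈ A) : ‖β - θ‖ ≤ ‖β - ω‖ := by
  rw [hθ.2, ← dist_eq_norm]
  exact infDist_le_dist_of_mem hω

theorem EuclideanSpace.norm_sub_lt_norm_sub_of_eq_off_pair {ι : Type*} [Fintype ι]
    {β θ θ' : EuclideanSpace ℝ ι} {i j : ι} (hij : i ≠ j)
    (hoff : ∀ m, m ≠ i → m ≠ j → θ' m = θ m)
    (hlt : (β i - θ' i) ^ 2 + (β j - θ' j) ^ 2 < (β i - θ i) ^ 2 + (β j - θ j) ^ 2) :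
    ‖β - θ'‖ < ‖β - θ‖ := by
  rw [← sq_lt_sq₀ (norm_nonneg _) (norm_nonneg _), EuclideanSpace.real_norm_sq_eq,
    EuclideanSpace.real_norm_sq_eq, ← sub_neg, ← sum_sub_distrib,
    Fintype.sum_eq_add i j hij fun m hm => by simp [hoff m hm.1 hm.2]]
  simp only [PiLp.sub_apply]
  linarith

section SignPermInvariant

variable {p : ℕ} {S : Set (E p)}
  (hsign : ∀ s : Fin p → ℝ, (∀ i, s i = 1 ∨ s i = -1) →
    ∀ β ∈ S, (WithLp.toLp 2 (fun i => s i * β i) : E p) ∈ S)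
  (hperm : ∀ π : Equiv.Perm (Fin p), ∀ β ∈ S, (WithLp.toLp 2 (fun i => β (π i)) : E p) ∈ S)
include hsign hperm

theorem exists_mem_swap_sign {θ : E p} (hθ : θ ∈ S) {i j : Fin p} (hij : i ≠ j) {ε : ℝ}
    (hε : ε = 1 ∨ ε = -1) :
    ∃ θ' ∈ S, θ' i = θ j ∧ θ' j = ε * θ i ∧ ∀ m, m ≠ i → m ≠ j → θ' m = θ m := by
  refine ⟨WithLp.toLp 2 fun m => (if m = j then ε else 1) * θ (Equiv.swap i j m),
    hsign _ (fun m => by split_ifs; exacts [hε, .inl rfl]) _ (hperm _ θ hθ), ?_, ?_, ?_⟩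
  · simp [hij]
  · simp
  · intro m hmi hmj
    simp [hmj, Equiv.swap_apply_of_ne_of_ne hmi hmj]

theorem exists_mem_norm_sub_lt {θ : E p} (hθ : θ ∈ S) {β : E p} {i j : Fin p} (hθi : θ i ≠ 0)
    (hθj : θ j = 0) (hβ : |β i| < |β j|) : ∃ θ' ∈ S, ‖β - θ'‖ < ‖β - θ‖ := by
  have hij : i ≠ j := fun h => hθi (h ▸ hθj)
  obtain ⟨ε, hε, hεβθ⟩ : ∃ ε : ℝ, (ε = 1 ∨ ε = -1) ∧ ε * (β j * θ i) = |β j * θ i| := by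
    rcases le_total 0 (β j * θ i) with h | h
    · exact ⟨1, .inl rfl, by rw [one_mul, abs_of_nonneg h]⟩
    · exact ⟨-1, .inr rfl, by rw [neg_one_mul, abs_of_nonpos h]⟩
  obtain ⟨θ', hθ'S, hi, hj, hoff⟩ := exists_mem_swap_sign hsign hperm hθ hij hε
  refine ⟨θ', hθ'S, EuclideanSpace.norm_sub_lt_norm_sub_of_eq_off_pair hij hoff ?_⟩
  have hβθ : β i * θ i < |β j * θ i| :=
    calc β i * θ i ≤ |β i * θ i| := le_abs_self _
      _ < |β j * θ i| := by
        rw [abs_mul, abs_mul]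
        exact mul_lt_mul_of_pos_right hβ (abs_pos.2 hθi)
  have hε2 : ε ^ 2 * θ i ^ 2 = θ i ^ 2 := by rcases hε with rfl | rfl <;> ring
  rw [hi, hj, hθj]
  nlinarith

end SignPermInvariant

theorem proj_card_k_general (p k : ℕ) (hkp : k ≤ p)
    (S : Set (E p))
    (hsign : ∀ s : Fin p → ℝ, (∀ i, s i = 1 ∨ s i = -1) →
      ∀ β ∈ S, (WithLp.toLp 2 (fun i => s i * β i) : E p) ∈ S)
    (hperm : ∀ π : Equiv.Perm (Fin p), ∀ β ∈ S, (WithLp.toLp 2 (fun i => β (π i)) : E p) ∈ S)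
    (hcard : ∀ u ∈ S, (Finset.univ.filter fun i => u i ≠ 0).card ≤ k) :
    ∀ β : E p, ∀ θ ∈ projSet S β, ∀ i : Fin p,
      |β i| < (sortedAbs β).getD (k - 1) 0 → θ i = 0 := by
  intro β θ hθ i hβi
  by_contra hθi
  have hsupp : #((univ.filter fun m => θ m ≠ 0).erase i) < k :=
    (card_erase_lt_of_mem (by simpa using hθi)).trans_le (hcard θ hθ.1)
  obtain ⟨j, hjβ, hjθ⟩ :=
    exists_mem_notMem_of_card_lt_card (hsupp.trans_le (le_card_filter_getD_sortedAbs_le β hkp))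
  have hβij : |β i| < |β j| := hβi.trans_le (mem_filter.1 hjβ).2
  have hji : j ≠ i := by rintro rfl; exact hβij.false
  have hθj : θ j = 0 := by simpa [hji] using hjθ
  obtain ⟨θ', hθ'S, hlt⟩ := exists_mem_norm_sub_lt hsign hperm hθ.1 hθi hθj hβij
  exact (norm_sub_le_of_mem_projSet hθ hθ'S).not_gt hlt

/-- if the nonempty closed set `S` is sign- and permutation-invariant and
all of its elements have at most `k` nonzero entries, then any projection `θ` of `β`
onto `S` vanishes on every coordinate `i` with `|βᵢ| < β̄ₖ` (the `k`-th largest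
absolute value of the entries of `β`). -/
theorem proj_card_k (p k : ℕ) (hk1 : 1 ≤ k) (hkp : k ≤ p)
    (S : Set (E p)) (hne : S.Nonempty) (hclosed : IsClosed S)
    (hsign : ∀ s : Fin p → ℝ, (∀ i, s i = 1 ∨ s i = -1) →
      ∀ β ∈ S, (WithLp.toLp 2 (fun i => s i * β i) : E p) ∈ S)
    (hperm : ∀ π : Equiv.Perm (Fin p), ∀ β ∈ S, (WithLp.toLp 2 (fun i => β (π i)) : E p) ∈ S)
    (hcard : ∀ u ∈ S, (Finset.univ.filter fun i => u i ≠ 0).card ≤ k) :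
    ∀ β : E p, ∀ θ ∈ projSet S β, ∀ i : Fin p,
      |β i| < (sortedAbs β).getD (k - 1) 0 → θ i = 0 :=
  proj_card_k_general p k hkp S hsign hperm hcard

end
end

section
/- Let β⋆ ∈ ℝ^p with β⋆ ≠ 0 and let φ = φ(β⋆;‖·‖) be the relative diameter. Then every v ∈ ℝ^p satisfying (1/2)·‖v‖ + ‖β⋆‖ ≥ ‖β⋆ + v‖ also satisfies ‖v‖ ≤ 2φ·‖v‖₂. -/
open Metric Set

noncomputable section

/-- The dual norm of a norm `N` on `ℝ^p`: `‖θ‖⋆ = sup {⟨θ, β⟩ : N β ≤ 1}`. -/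
def dualOf {p : ℕ} (N : E p → ℝ) (θ : E p) : ℝ :=
  sSup ((fun β => (inner ℝ θ β : ℝ)) '' {β | N β ≤ 1})

/-- The dual norm unit ball `B⋆ = {z : ‖z‖⋆ ≤ 1}`. -/
def dualBall {p : ℕ} (N : E p → ℝ) : Set (E p) :=
  {z | dualOf N z ≤ 1}

/-- The subdifferential of `N` at `β`. -/
def subdiff {p : ℕ} (N : E p → ℝ) (β : E p) : Set (E p) :=
  {g | ∀ y : E p, N y ≥ N β + (inner ℝ g (y - β) : ℝ)}

/-- The relative diameter `φ(β; N)`: the Hausdorff distance (in the Euclidean metric)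
between the dual norm ball and the subdifferential of `N` at `β`. -/
def relDiam {p : ℕ} (N : E p → ℝ) (β : E p) : ℝ :=
  Metric.hausdorffDist (dualBall N) (subdiff N β)

/-!
Let `z ∈ B⋆` norm `v`, i.e. `⟨z, v⟩ = ‖v‖` (Hahn–Banach). Every `g ∈ ∂‖β⋆‖` satisfies
`⟨g, v⟩ ≤ ‖β⋆ + v‖ - ‖β⋆‖ ≤ ‖v‖ / 2`, hence
`‖v‖ = ⟨g, v⟩ + ⟨z - g, v⟩ ≤ ‖v‖ / 2 + ‖z - g‖₂ ‖v‖₂`.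
Taking the infimum over `g` replaces `‖z - g‖₂` by the distance from `z` to `∂‖β⋆‖`, which is at
most `φ`. The Hausdorff distance is finite because all norms on `ℝ^p` are equivalent, so `B⋆` is
bounded.
-/

open scoped InnerProductSpace

namespace Seminorm

variable {V : Type*}

theorem exists_dual_le_eq [AddCommGroup V] [Module ℝ V] (q : Seminorm ℝ V) (v : V) :
    ∃ f : V →ₗ[ℝ] ℝ, (∀ x, f x ≤ q x) ∧ f v = q v := by
  have hv : ∀ c : ℝ, c • v = 0 → c • q v = 0 := fun c hc => by
    rcases smul_eq_zero.1 hc with rfl | rfl <;> simp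
  let f₀ := LinearPMap.mkSpanSingleton' (σ := RingHom.id ℝ) v (q v) hv
  have hf₀ : ∀ x : f₀.domain, f₀ x ≤ q x := by
    rintro ⟨x, hx⟩
    obtain ⟨c, rfl⟩ := Submodule.mem_span_singleton.1 hx
    rw [LinearPMap.mkSpanSingleton'_apply, map_smul_eq_mul, smul_eq_mul, Real.norm_eq_abs]
    exact mul_le_mul_of_nonneg_right (le_abs_self c) (apply_nonneg q v)
  obtain ⟨f, hf_ext, hf_le⟩ := exists_extension_of_le_sublinear f₀ q
    (fun c hc x => by rw [map_smul_eq_mul, Real.norm_of_nonneg hc.le]) (map_add_le_add q) hf₀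
  exact ⟨f, hf_le, (hf_ext ⟨v, Submodule.mem_span_singleton_self v⟩).trans
    (LinearPMap.mkSpanSingleton'_apply_self _ _ _ _)⟩

variable [NormedAddCommGroup V] [NormedSpace ℝ V] [FiniteDimensional ℝ V]

theorem continuous_of_finiteDimensional (q : Seminorm ℝ V) : Continuous q :=
  q.convexOn.locallyLipschitz.continuous

theorem exists_pos_mul_norm_le (q : Seminorm ℝ V) (hq : ∀ x, q x = 0 → x = 0) :
    ∃ c, 0 < c ∧ ∀ x, c * ‖x‖ ≤ q x := by
  have hpos : ∀ x ∈ sphere (0 : V) 1, 0 < q x := fun x hx =>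
    (apply_nonneg q x).lt_of_ne' fun h => by simp [hq x h] at hx
  obtain ⟨c, hc, hc_le⟩ := (isCompact_sphere (0 : V) 1).exists_forall_le'
    q.continuous_of_finiteDimensional.continuousOn hpos
  refine ⟨c, hc, fun x => ?_⟩
  rcases eq_or_ne x 0 with rfl | hx
  · simp
  have hx' : 0 < ‖x‖ := norm_pos_iff.2 hx
  have := hc_le (‖x‖⁻¹ • x) (by simp [norm_smul, hx'.ne'])
  rwa [map_smul_eq_mul, norm_inv, norm_norm, le_inv_mul_iff₀ hx', mul_comm] at this

end Seminorm

theorem Seminorm.exists_inner_le_eq {V : Type*} [NormedAddCommGroup V] [InnerProductSpace ℝ V]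
    [FiniteDimensional ℝ V] (q : Seminorm ℝ V) (v : V) :
    ∃ z : V, (∀ x, ⟪z, x⟫_ℝ ≤ q x) ∧ ⟪z, v⟫_ℝ = q v := by
  obtain ⟨f, hf_le, hf_eq⟩ := q.exists_dual_le_eq v
  let z := (InnerProductSpace.toDual ℝ V).symm (LinearMap.toContinuousLinearMap f)
  have hz : ∀ x, ⟪z, x⟫_ℝ = f x := fun x => InnerProductSpace.toDual_symm_apply
  exact ⟨z, fun x => hz x ▸ hf_le x, hz v ▸ hf_eq⟩

theorem inner_le_add_infDist_mul {V : Type*} [NormedAddCommGroup V] [InnerProductSpace ℝ V]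
    {S : Set V} (hS : S.Nonempty) {a : ℝ} {v : V} (h : ∀ g ∈ S, ⟪g, v⟫_ℝ ≤ a) (z : V) :
    ⟪z, v⟫_ℝ ≤ a + infDist z S * ‖v‖ := by
  rcases eq_or_ne v 0 with rfl | hv
  · obtain ⟨g, hg⟩ := hS
    simpa using h g hg
  have hv' : 0 < ‖v‖ := norm_pos_iff.2 hv
  have : (⟪z, v⟫_ℝ - a) / ‖v‖ ≤ infDist z S := by
    refine (le_infDist hS).2 fun g hg => (div_le_iff₀ hv').2 ?_
    calc ⟪z, v⟫_ℝ - a ≤ ⟪z - g, v⟫_ℝ := by rw [inner_sub_left]; linarith [h g hg]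
      _ ≤ dist z g * ‖v‖ := dist_eq_norm z g ▸ real_inner_le_norm _ _
  rw [div_le_iff₀ hv'] at this
  linarith

section RelativeDiameter

variable {p : ℕ}

theorem mem_dualBall_of_forall_inner_le {N : E p → ℝ} {z : E p} (hz : ∀ x, ⟪z, x⟫_ℝ ≤ N x) :
    z ∈ dualBall N :=
  Real.sSup_le (by rintro _ ⟨β, hβ, rfl⟩; exact (hz β).trans hβ) zero_le_one

theorem mem_subdiff_of_inner_le_of_inner_eq {N : E p → ℝ} {β g : E p}
    (hg_le : ∀ x, ⟪g, x⟫_ℝ ≤ N x) (hg_eq : ⟪g, β⟫_ℝ = N β) : g ∈ subdiff N β := fun y => by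
  rw [inner_sub_right, hg_eq]
  linarith [hg_le y]

variable (q : Seminorm ℝ (E p))

theorem inner_le_dualOf_mul (hq : ∀ x, q x = 0 → x = 0) (z x : E p) :
    ⟪z, x⟫_ℝ ≤ dualOf q z * q x := by
  obtain ⟨c, hc, hc_le⟩ := q.exists_pos_mul_norm_le hq
  -- `dualOf` is a genuine supremum only because definiteness makes `{β | q β ≤ 1}` bounded.
  have hbdd : BddAbove ((fun β => ⟪z, β⟫_ℝ) '' {β | q β ≤ 1}) := by
    refine ⟨‖z‖ * c⁻¹, ?_⟩
    rintro _ ⟨β, hβ, rfl⟩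
    refine (real_inner_le_norm z β).trans (mul_le_mul_of_nonneg_left ?_ (norm_nonneg z))
    simpa using (le_inv_mul_iff₀ hc (b := 1)).2 (by simpa using (hc_le β).trans hβ)
  rcases (apply_nonneg q x).eq_or_lt' with hx | hx
  · simp [hq x hx]
  have hmem : ⟪z, (q x)⁻¹ • x⟫_ℝ ≤ dualOf q z := le_csSup hbdd
    ⟨(q x)⁻¹ • x, by simp [map_smul_eq_mul, abs_of_pos hx, hx.ne'], rfl⟩
  rw [real_inner_smul_right, inv_mul_le_iff₀ hx] at hmem
  linarith

theorem inner_le_of_mem_dualBall (hq : ∀ x, q x = 0 → x = 0) {z : E p} (hz : z ∈ dualBall q)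
    (x : E p) : ⟪z, x⟫_ℝ ≤ q x :=
  (inner_le_dualOf_mul q hq z x).trans
    (by simpa using mul_le_mul_of_nonneg_right hz (apply_nonneg q x))

theorem inner_le_of_mem_subdiff {β g : E p} (hg : g ∈ subdiff q β) (x : E p) :
    ⟪g, x⟫_ℝ ≤ q x := by
  have := hg (β + x)
  rw [add_sub_cancel_left] at this
  linarith [map_add_le_add q β x]

theorem subdiff_subset_dualBall (β : E p) : subdiff q β ⊆ dualBall q := fun _ hg =>
  mem_dualBall_of_forall_inner_le (inner_le_of_mem_subdiff q hg)

theorem subdiff_nonempty (β : E p) : (subdiff q β).Nonempty :=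
  let ⟨z, hz_le, hz_eq⟩ := q.exists_inner_le_eq β
  ⟨z, mem_subdiff_of_inner_le_of_inner_eq hz_le hz_eq⟩

theorem isBounded_dualBall (hq : ∀ x, q x = 0 → x = 0) : Bornology.IsBounded (dualBall q) := by
  obtain ⟨C, hC, hC_le⟩ := q.bound_of_continuous_normedSpace q.continuous_of_finiteDimensional
  refine isBounded_iff_forall_norm_le.2 ⟨C, fun z hz => ?_⟩
  have : ‖z‖ * ‖z‖ ≤ C * ‖z‖ := by
    rw [← real_inner_self_eq_norm_mul_norm]
    exact (inner_le_of_mem_dualBall q hq hz z).trans (hC_le z)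
  nlinarith [norm_nonneg z]

theorem hausdorffEDist_dualBall_subdiff_ne_top (hq : ∀ x, q x = 0 → x = 0) (β : E p) :
    hausdorffEDist (dualBall q) (subdiff q β) ≠ ⊤ :=
  hausdorffEDist_ne_top_of_nonempty_of_bounded
    ((subdiff_nonempty q β).mono (subdiff_subset_dualBall q β)) (subdiff_nonempty q β)
    (isBounded_dualBall q hq) ((isBounded_dualBall q hq).subset (subdiff_subset_dualBall q β))

end RelativeDiameter

theorem errSet_subset_cone_general (p : ℕ) (N : E p → ℝ)
    (Ntriangle : ∀ x z : E p, N (x + z) ≤ N x + N z)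
    (Nsmul : ∀ (a : ℝ) (x : E p), N (a • x) = |a| * N x)
    (Ndefinite : ∀ x : E p, N x = 0 → x = 0)
    (βstar : E p) :
    ∀ v : E p, (1 / 2 : ℝ) * N v + N βstar ≥ N (βstar + v) →
      N v ≤ 2 * relDiam N βstar * ‖v‖ := by
  intro v hv
  obtain ⟨q, rfl⟩ : ∃ q : Seminorm ℝ (E p), ⇑q = N :=
    ⟨Seminorm.of N Ntriangle fun a x => by rw [Real.norm_eq_abs, Nsmul], rfl⟩
  obtain ⟨z, hz_le, hz_eq⟩ := q.exists_inner_le_eq v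
  have hsubdiff_v : ∀ g ∈ subdiff q βstar, ⟪g, v⟫_ℝ ≤ 1 / 2 * q v := fun g hg => by
    have := hg (βstar + v)
    rw [add_sub_cancel_left] at this
    linarith
  have hinfDist : infDist z (subdiff q βstar) ≤ relDiam q βstar :=
    infDist_le_hausdorffDist_of_mem (mem_dualBall_of_forall_inner_le hz_le)
      (hausdorffEDist_dualBall_subdiff_ne_top q Ndefinite βstar)
  have key := inner_le_add_infDist_mul (subdiff_nonempty q βstar) hsubdiff_v z
  rw [hz_eq] at key
  linarith [mul_le_mul_of_nonneg_right hinfDist (norm_nonneg v)]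

/-- every `v` in the error set `Ξ(β⋆)` satisfies `‖v‖ ≤ 2φ‖v‖₂` where
`φ = φ(β⋆; ‖·‖)` is the relative diameter. -/
theorem errSet_subset_cone (p : ℕ) (N : E p → ℝ)
    (Ntriangle : ∀ x z : E p, N (x + z) ≤ N x + N z)
    (Nsmul : ∀ (a : ℝ) (x : E p), N (a • x) = |a| * N x)
    (Ndefinite : ∀ x : E p, N x = 0 → x = 0)
    (βstar : E p) (hβstar : βstar ≠ 0) :
    ∀ v : E p, (1 / 2 : ℝ) * N v + N βstar ≥ N (βstar + v) →
      N v ≤ 2 * relDiam N βstar * ‖v‖ :=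
  errSet_subset_cone_general p N Ntriangle Nsmul Ndefinite βstar
end
end
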